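/- arXiv:1205.4161 — 2 statements merged into one kernel-verified Lean document; each statement's English description precedes it below -/
import Mathlib

section
/- If k divides n, then the hypercube Q_k divides the hypercube Q_n. -/
/-!
Write the coordinates of `Q_{kc}` as pairs `(t, j) ∈ Fin k × Fin c`, so that they fall into `c`
blocks of `k` coordinates. For each block `j` and each vertex `x`, varying the coordinates of block
`j` while freezing the others at their values in `x` gives a copy of `Q_k`. An edge flips exactly
one coordinate, say in block `j`, and then lies in exactly one of these copies: the one of block `j`
through either endpoint. The alphabet `ZMod 2` plays no role, so the argument is carried out for
Hamming graphs over any alphabet.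
-/

open SimpleGraph

/-- `H` divides `G`: the edge set of `G` can be partitioned into edge sets of
subgraphs of `G`, each isomorphic to `H`. -/
def GraphDivides {α β : Type} (H : SimpleGraph α) (G : SimpleGraph β) : Prop :=
  ∃ (ι : Type) (f : ι → G.Subgraph),
    (∀ i, Nonempty (H ≃g (f i).coe)) ∧
    ∀ e ∈ G.edgeSet, ∃! i, e ∈ (f i).edgeSet

/-- The `n`-dimensional hypercube graph. -/
def cube (n : ℕ) : SimpleGraph (Fin n → ZMod 2) where
  Adj x y := hammingDist x y = 1
  symm := ⟨fun x y h => (hammingDist_comm y x).trans h⟩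
  loopless := ⟨fun x h => by simp [hammingDist_self] at h⟩

variable {ι ι' κ β : Type} [Fintype ι] [Fintype ι'] [DecidableEq β]

lemma hammingDist_eq_one_iff {x y : ι → β} :
    hammingDist x y = 1 ↔ ∃ i, x i ≠ y i ∧ ∀ i', x i' ≠ y i' → i' = i := by
  simp [hammingDist, Finset.card_eq_one, Finset.eq_singleton_iff_unique_mem]

lemma hammingDist_comp_eq_of_injective {f : ι' → ι} (hf : f.Injective) {x y : ι → β}
    (h : ∀ i ∉ Set.range f, x i = y i) :
    hammingDist (x ∘ f) (y ∘ f) = hammingDist x y := by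
  classical
  rw [hammingDist, hammingDist, ← Finset.card_image_of_injective _ hf]
  congr 1
  ext i
  simp only [Finset.mem_image, Finset.mem_filter, Finset.mem_univ, true_and, Function.comp_apply]
  constructor
  · rintro ⟨t, ht, rfl⟩
    exact ht
  · intro hi
    by_contra hnot
    exact hi (h i fun ⟨t, ht⟩ => hnot ⟨t, ht ▸ hi, ht⟩)

def hammingGraph (ι β : Type) [Fintype ι] [DecidableEq β] : SimpleGraph (ι → β) where
  Adj x y := hammingDist x y = 1
  symm := ⟨fun x y h => (hammingDist_comm y x).trans h⟩
  loopless := ⟨fun x h => by simp [hammingDist_self] at h⟩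

lemma cube_eq_hammingGraph (n : ℕ) : cube n = hammingGraph (Fin n) (ZMod 2) := rfl

def blockSubgraph (b : ι → κ) (j : κ) (x : ι → β) : (hammingGraph ι β).Subgraph :=
  (⊤ : (hammingGraph ι β).Subgraph).induce {y | ∀ i, b i ≠ j → y i = x i}

section Partition

variable {b : ι → κ} {j : κ} {x y z : ι → β}

lemma blockSubgraph_eq_of_mem_verts (hy : y ∈ (blockSubgraph b j x).verts) :
    blockSubgraph b j y = blockSubgraph b j x := by
  unfold blockSubgraph
  congr 1
  ext z
  exact forall₂_congr fun i hi => by rw [hy i hi]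

lemma mk_mem_edgeSet_blockSubgraph (hyz : (hammingGraph ι β).Adj y z) {i : ι} (hi : y i ≠ z i) :
    s(y, z) ∈ (blockSubgraph b (b i) y).edgeSet := by
  obtain ⟨i₀, -, hunique⟩ := hammingDist_eq_one_iff.mp hyz
  refine ⟨fun _ _ => rfl, fun i' hi' => ?_, hyz⟩
  by_contra hne
  exact hi' (by rw [hunique i' (Ne.symm hne), ← hunique i hi])

lemma blockSubgraph_eq_of_mk_mem_edgeSet (he : s(y, z) ∈ (blockSubgraph b j x).edgeSet)
    {i : ι} (hi : y i ≠ z i) : blockSubgraph b j x = blockSubgraph b (b i) y := by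
  obtain ⟨hy, hz, -⟩ := he
  obtain rfl : b i = j := by
    by_contra hij
    exact hi ((hy i hij).trans (hz i hij).symm)
  exact (blockSubgraph_eq_of_mem_verts hy).symm

-- Indexed by the subgraphs themselves, since many pairs `(j, x)` give the same block.
lemma existsUnique_blockSubgraph (b : ι → κ) {e : Sym2 (ι → β)}
    (he : e ∈ (hammingGraph ι β).edgeSet) :
    ∃! S : Set.range (fun p : κ × (ι → β) => blockSubgraph b p.1 p.2), e ∈ S.1.edgeSet := by
  induction e using Sym2.ind with
  | h y z =>
    obtain ⟨i, hi, -⟩ := hammingDist_eq_one_iff.mp he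
    refine ⟨⟨_, (b i, y), rfl⟩, mk_mem_edgeSet_blockSubgraph he hi, ?_⟩
    rintro ⟨_, ⟨j, x⟩, rfl⟩ hS
    exact Subtype.ext (blockSubgraph_eq_of_mk_mem_edgeSet hS hi)

end Partition

section Blocks

variable [DecidableEq κ] (e : ι ≃ ι' × κ) (j : κ) (x : ι → β)

def blockEquiv : (blockSubgraph (fun i => (e i).2) j x).verts ≃ (ι' → β) where
  toFun y t := y.1 (e.symm (t, j))
  invFun z := ⟨fun i => if (e i).2 = j then z (e i).1 else x i, fun _ hi => if_neg hi⟩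
  left_inv y := Subtype.ext <| funext fun i => by
    by_cases hi : (e i).2 = j
    · have hei : e.symm ((e i).1, j) = i := by rw [← hi, Prod.mk.eta, e.symm_apply_apply]
      simp only [hi, if_true, hei]
    · simp [hi, y.2 i hi]
  right_inv z := funext fun t => by simp

def blockSubgraphIso : (blockSubgraph (fun i => (e i).2) j x).coe ≃g hammingGraph ι' β where
  toEquiv := blockEquiv e j x
  map_rel_iff' {y y'} := by
    have hagree : ∀ i ∉ Set.range fun t => e.symm (t, j), y.1 i = y'.1 i := fun i hi => by
      have hij : (e i).2 ≠ j := fun hij => hi ⟨(e i).1, by simp [← hij]⟩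
      rw [y.2 i hij, y'.2 i hij]
    change hammingDist (y.1 ∘ _) (y'.1 ∘ _) = 1 ↔ y.1 ∈ _ ∧ y'.1 ∈ _ ∧ hammingDist y.1 y'.1 = 1
    rw [hammingDist_comp_eq_of_injective (fun t t' h => by simpa using h) hagree]
    exact ⟨fun h => ⟨y.2, y'.2, h⟩, fun h => h.2.2⟩

end Blocks

theorem hammingGraph_divides_of_equiv_prod [DecidableEq κ] (e : ι ≃ ι' × κ) :
    GraphDivides (hammingGraph ι' β) (hammingGraph ι β) := by
  refine ⟨_, Subtype.val, ?_, fun _ he => existsUnique_blockSubgraph (fun i => (e i).2) he⟩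
  rintro ⟨_, ⟨j, x⟩, rfl⟩
  exact ⟨(blockSubgraphIso e j x).symm⟩

theorem cube_divides_cube_of_dvd (k n : ℕ) (h : k ∣ n) :
    GraphDivides (cube k) (cube n) := by
  obtain ⟨c, rfl⟩ := h
  rw [cube_eq_hammingGraph, cube_eq_hammingGraph]
  exact hammingGraph_divides_of_equiv_prod finProdFinEquiv.symm
end

section
/- For every k ≥ 3, the path P_{2^k} with 2^k edges does not divide the hypercube Q_{2k+1}. -/
open SimpleGraph

/-!
In an edge decomposition of a graph into copies of `H`, the degree of a vertex is the sum of its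
degrees in the pieces, so a vertex of odd degree has odd degree in some piece. If `G` is
`d`-regular with `d` odd and there are `N` pieces, this gives `|V(G)| ≤ N · o(H)`, where `o(H)`
is the number of odd-degree vertices of `H`, while counting degrees gives
`d · |V(G)| = N · 2|E(H)|`. Hence `2|E(H)| ≤ d · o(H)`. A path has only its two ends as
odd-degree vertices, so a path with `m` edges dividing `G` forces `m ≤ d`; for `Q_{2k+1}` and
`m = 2^k` this says `2^k ≤ 2k + 1`, false for `k ≥ 3`.
-/

open Finset

theorem Finset.card_filter_odd_eq_sum_mod_two {ι : Type*} (s : Finset ι) (g : ι → ℕ) :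
    #{i ∈ s | Odd (g i)} = ∑ i ∈ s, g i % 2 := by
  rw [card_filter]
  refine sum_congr rfl fun i _ ↦ ?_
  rcases Nat.even_or_odd (g i) with h | h
  · simp [Nat.even_iff.mp h, Nat.not_odd_iff_even.mpr h]
  · simp [h, Nat.odd_iff.mp h]

namespace SimpleGraph

variable {V α ι : Type*} {G : SimpleGraph V} {H : SimpleGraph α}

theorem Subgraph.sum_comp_degree_eq_of_iso [Fintype V] [Fintype α] [DecidableRel H.Adj]
    {G' : G.Subgraph} [∀ v, Fintype (G'.neighborSet v)] (e : H ≃g G'.coe)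
    {φ : ℕ → ℕ} (hφ : φ 0 = 0) : ∑ v, φ (G'.degree v) = ∑ u, φ (H.degree u) := by
  refine (Fintype.sum_of_injective (fun u ↦ (e u : V)) (Subtype.val_injective.comp e.injective)
    _ _ (fun v hv ↦ ?_) fun u ↦ ?_).symm
  · have hv' : v ∉ G'.verts := fun h ↦ hv ⟨e.symm ⟨v, h⟩, by simp⟩
    rw [Subgraph.degree_of_notMem_verts hv', hφ]
  · rw [← Subgraph.coe_degree, e.degree_eq]

theorem degree_eq_sum_subgraph_degree [Fintype ι] {f : ι → G.Subgraph}
    (hf : ∀ e ∈ G.edgeSet, ∃! i, e ∈ (f i).edgeSet) (v : V) [Fintype (G.neighborSet v)]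
    [∀ i, Fintype ((f i).neighborSet v)] : G.degree v = ∑ i, (f i).degree v := by
  classical
  have hunion : G.neighborSet v = ⋃ i, (f i).neighborSet v := by
    ext w
    simp only [mem_neighborSet, Set.mem_iUnion, Subgraph.mem_neighborSet]
    refine ⟨fun h ↦ ?_, fun ⟨i, hi⟩ ↦ hi.adj_sub⟩
    obtain ⟨i, hi, -⟩ := hf s(v, w) h
    exact ⟨i, hi⟩
  have hdisj : ∀ i j, i ≠ j →
      Disjoint ((f i).neighborSet v).toFinset ((f j).neighborSet v).toFinset := by
    intro i j hij
    refine Finset.disjoint_left.mpr fun w hwi hwj ↦ hij ?_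
    rw [Set.mem_toFinset] at hwi hwj
    exact (hf s(v, w) hwi.adj_sub).unique hwi hwj
  rw [← card_neighborSet_eq_degree, ← Set.toFinset_card]
  simp_rw [← Subgraph.finset_card_neighborSet_eq_degree]
  rw [← Finset.card_biUnion (fun i _ j _ ↦ hdisj i j)]
  congr 1
  ext w
  simp [hunion]

theorem finite_of_existsUnique_mem_edgeSet [Finite V] {f : ι → G.Subgraph}
    (hf : ∀ e ∈ G.edgeSet, ∃! i, e ∈ (f i).edgeSet) (hne : ∀ i, (f i).edgeSet.Nonempty) :
    Finite ι := by
  choose e he using hne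
  refine Finite.of_injective (fun i ↦ (⟨e i, (f i).edgeSet_subset (he i)⟩ : G.edgeSet))
    fun i j hij ↦ ?_
  have hj : e i ∈ (f j).edgeSet := by
    rw [show e i = e j from congrArg Subtype.val hij]
    exact he j
  exact (hf _ ((f i).edgeSet_subset (he i))).unique (he i) hj

section Decomposition

variable [Fintype V] [DecidableRel G.Adj] [Fintype α] [DecidableRel H.Adj] [Fintype ι]
  {f : ι → G.Subgraph}

theorem sum_degree_eq_card_mul_sum_degree (hiso : ∀ i, Nonempty (H ≃g (f i).coe))
    (hf : ∀ e ∈ G.edgeSet, ∃! i, e ∈ (f i).edgeSet) :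
    ∑ v, G.degree v = Fintype.card ι * ∑ u, H.degree u := by
  classical
  calc ∑ v, G.degree v = ∑ v, ∑ i, (f i).degree v :=
        sum_congr rfl fun v _ ↦ degree_eq_sum_subgraph_degree hf v
    _ = ∑ i, ∑ v, (f i).degree v := sum_comm
    _ = ∑ _i : ι, ∑ u, H.degree u := sum_congr rfl fun i _ ↦
        Subgraph.sum_comp_degree_eq_of_iso (hiso i).some (φ := id) rfl
    _ = Fintype.card ι * ∑ u, H.degree u := by simp

theorem card_odd_degree_le_card_mul_card_odd_degree (hiso : ∀ i, Nonempty (H ≃g (f i).coe))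
    (hf : ∀ e ∈ G.edgeSet, ∃! i, e ∈ (f i).edgeSet) :
    #{v | Odd (G.degree v)} ≤ Fintype.card ι * #{u | Odd (H.degree u)} := by
  classical
  calc #{v | Odd (G.degree v)} = ∑ v, G.degree v % 2 := card_filter_odd_eq_sum_mod_two _ _
    _ ≤ ∑ v, ∑ i, (f i).degree v % 2 := sum_le_sum fun v _ ↦ by
        rw [degree_eq_sum_subgraph_degree hf, sum_nat_mod]
        exact Nat.mod_le _ _
    _ = ∑ i, ∑ v, (f i).degree v % 2 := sum_comm
    _ = ∑ _i : ι, ∑ u, H.degree u % 2 := sum_congr rfl fun i _ ↦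
        Subgraph.sum_comp_degree_eq_of_iso (hiso i).some (φ := (· % 2)) rfl
    _ = Fintype.card ι * #{u | Odd (H.degree u)} := by
        rw [card_filter_odd_eq_sum_mod_two]; simp

end Decomposition

end SimpleGraph

theorem GraphDivides.two_mul_card_edgeFinset_le {α β : Type} [Fintype α] [DecidableEq α]
    {H : SimpleGraph α} [DecidableRel H.Adj] [Fintype β] [Nonempty β]
    {G : SimpleGraph β} [DecidableRel G.Adj] {d : ℕ} (hG : G.IsRegularOfDegree d) (hd : Odd d)
    (hH : H ≠ ⊥) (hdiv : GraphDivides H G) :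
    2 * #H.edgeFinset ≤ d * #{u | Odd (H.degree u)} := by
  obtain ⟨ι, f, hiso, hf⟩ := hdiv
  have : Finite ι := finite_of_existsUnique_mem_edgeSet hf fun i ↦ by
    obtain ⟨x, y, hxy⟩ := ne_bot_iff_exists_adj.mp hH
    exact ⟨_, Subgraph.mem_edgeSet.mpr ((hiso i).some.map_rel_iff.mpr hxy)⟩
  have := Fintype.ofFinite ι
  have hedges : d * Fintype.card β = Fintype.card ι * (2 * #H.edgeFinset) := by
    rw [← sum_degrees_eq_twice_card_edges, ← sum_degree_eq_card_mul_sum_degree hiso hf]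
    simp [hG.degree_eq, mul_comm]
  have hcover : Fintype.card β ≤ Fintype.card ι * #{u | Odd (H.degree u)} := by
    have := card_odd_degree_le_card_mul_card_odd_degree hiso hf
    simpa [hG.degree_eq, hd] using this
  have hι : 0 < Fintype.card ι := Nat.pos_of_mul_pos_right (Fintype.card_pos.trans_le hcover)
  refine Nat.le_of_mul_le_mul_left ?_ hι
  calc Fintype.card ι * (2 * #H.edgeFinset) = d * Fintype.card β := hedges.symm
    _ ≤ d * (Fintype.card ι * #{u | Odd (H.degree u)}) := Nat.mul_le_mul_left d hcover
    _ = Fintype.card ι * (d * #{u | Odd (H.degree u)}) := by ring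

instance (n : ℕ) : DecidableRel (pathGraph n).Adj :=
  fun _ _ ↦ decidable_of_iff _ pathGraph_adj.symm

namespace SimpleGraph

theorem pathGraph_ne_bot {n : ℕ} (hn : 2 ≤ n) : pathGraph n ≠ ⊥ :=
  ne_bot_iff_exists_adj.mpr ⟨⟨0, by omega⟩, ⟨1, hn⟩, by simp [pathGraph_adj]⟩

theorem pathGraph_card_edgeFinset (m : ℕ) : #(pathGraph (m + 1)).edgeFinset = m := by
  have hinj : Function.Injective fun i : Fin m ↦ s(i.castSucc, i.succ) := by
    intro i j h
    simp only [Sym2.eq_iff, Fin.ext_iff, Fin.val_castSucc, Fin.val_succ] at h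
    ext; omega
  have : (pathGraph (m + 1)).edgeFinset = univ.map ⟨_, hinj⟩ := by
    ext e
    induction e using Sym2.ind with | h x y => ?_
    simp only [mem_edgeFinset, mem_edgeSet, pathGraph_adj, mem_map, mem_univ, true_and,
      Function.Embedding.coeFn_mk, Sym2.eq_iff, Fin.ext_iff, Fin.val_castSucc, Fin.val_succ]
    constructor
    · rintro (h | h)
      · exact ⟨⟨x, by omega⟩, Or.inl ⟨rfl, h⟩⟩
      · exact ⟨⟨y, by omega⟩, Or.inr ⟨rfl, h⟩⟩
    · rintro ⟨i, h | h⟩ <;> omega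
  rw [this, card_map, card_univ, Fintype.card_fin]

theorem pathGraph_degree_eq_two {n : ℕ} {v : Fin n} (h0 : v.val ≠ 0) (hn : v.val + 1 ≠ n) :
    (pathGraph n).degree v = 2 := by
  have : (pathGraph n).neighborFinset v = {⟨v - 1, by omega⟩, ⟨v + 1, by omega⟩} := by
    ext w
    simp only [mem_neighborFinset, pathGraph_adj, mem_insert, mem_singleton, Fin.ext_iff]
    omega
  rw [← card_neighborFinset_eq_degree, this, card_pair (by simp [Fin.ext_iff])]

theorem pathGraph_card_odd_degree_le_two (n : ℕ) : #{v | Odd ((pathGraph n).degree v)} ≤ 2 := by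
  cases n with
  | zero => simp
  | succ m =>
    refine (card_le_card fun v hv ↦ ?_).trans (card_le_two (a := 0) (b := Fin.last m))
    by_contra hv'
    simp only [mem_insert, mem_singleton, Fin.ext_iff, Fin.val_zero, Fin.val_last, not_or] at hv'
    simp [pathGraph_degree_eq_two hv'.1 (by omega)] at hv
    exact Nat.not_odd_iff_even.mpr even_two hv

end SimpleGraph

instance (n : ℕ) : DecidableRel (cube n).Adj :=
  fun x y ↦ inferInstanceAs (Decidable (hammingDist x y = 1))

theorem ZMod.two_eq_add_one_of_ne {a b : ZMod 2} : a ≠ b → b = a + 1 := by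
  revert a b; decide

theorem cube_adj_iff {n : ℕ} {x y : Fin n → ZMod 2} :
    (cube n).Adj x y ↔ ∃ i, y = x + Pi.single i 1 := by
  change #{i | x i ≠ y i} = 1 ↔ _
  rw [card_eq_one]
  refine exists_congr fun i ↦ ⟨fun hi ↦ funext fun j ↦ ?_, ?_⟩
  · have hj := Finset.ext_iff.mp hi j
    simp only [mem_filter, mem_univ, true_and, mem_singleton] at hj
    by_cases hji : j = i
    · subst hji
      simpa using ZMod.two_eq_add_one_of_ne (hj.mpr rfl)
    · simpa [hji, eq_comm] using hj.not.mpr hji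
  · rintro rfl
    ext j
    by_cases hji : j = i
    · subst hji; simp
    · simp [hji]

theorem cube_isRegularOfDegree (n : ℕ) : (cube n).IsRegularOfDegree n := by
  intro x
  have : (cube n).neighborFinset x = univ.image fun i ↦ x + Pi.single i 1 := by
    ext y
    simp [cube_adj_iff, eq_comm]
  rw [← card_neighborFinset_eq_degree, this, card_image_of_injective, card_univ, Fintype.card_fin]
  intro i j hij
  by_contra hne
  simpa [hne] using congrFun (add_left_cancel hij) i

theorem two_mul_add_one_lt_two_pow {k : ℕ} (hk : 3 ≤ k) : 2 * k + 1 < 2 ^ k := by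
  induction k, hk using Nat.le_induction with
  | base => norm_num
  | succ n _ ih => rw [pow_succ]; omega

theorem path_pow_two_not_divides_cube (k : ℕ) (hk : 3 ≤ k) :
    ¬ GraphDivides (pathGraph (2 ^ k + 1)) (cube (2 * k + 1)) := by
  intro hdiv
  have hbound := hdiv.two_mul_card_edgeFinset_le (cube_isRegularOfDegree _) (odd_two_mul_add_one k)
    (pathGraph_ne_bot (Nat.add_le_add_right Nat.one_le_two_pow 1))
  rw [pathGraph_card_edgeFinset] at hbound
  have : 2 * 2 ^ k ≤ (2 * k + 1) * 2 :=
    hbound.trans (Nat.mul_le_mul_left _ (pathGraph_card_odd_degree_le_two _))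
  have := two_mul_add_one_lt_two_pow hk
  omega
end
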